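/- arXiv:1608.03534 — 2 statements merged into one kernel-verified Lean document; each statement's English description precedes it below -/
import Mathlib

section
/- Let V be an n-dimensional real vector space equipped with a nondegenerate symmetric bilinear form (·,·) of signature (n−r,r) with 1 ≤ r ≤ n, and let C_j, C_j′ ∈ V for j = 1, …, r. Assume that for every s = (s_1,…,s_r) ∈ [0,1]^r, the bilinear form (·,·) is negative definite on the r-dimensional subspace span{B_1(s_1), …, B_r(s_r)} (equivalently, the r×r Gram matrix of (B_1(s_1), …, B_r(s_r)) is negative definite). Let L ⊆ V be a lattice (the ℤ-span of an ℝ-basis of V), let μ ∈ V, and let v > 0. Then the family x ↦ Φ_r(x)·exp(−π·v·(x,x)), indexed by x ∈ L + μ, is absolutely summable, i.e. ∑_{x ∈ L+μ} |Φ_r(x)|·e^{−π v (x,x)} < ∞. -/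
/-!
If `Φ_r(x) ≠ 0` then, for every `j`, the affine function `s ↦ (x, B_j(s))` takes values of
different signs at `0` and `1`, so `x` is orthogonal to `B_1(s_1), …, B_r(s_r)` for some
`s ∈ [0, 1]^r`. These vectors span a negative definite `r`-plane, and since the form has only
`r` negative directions (Sylvester's law of inertia), it is positive definite on the orthogonal
complement of that plane. The set of such `x` is a closed cone, so compactness of `[0, 1]^r` and
of the unit sphere yields `c > 0` with `(x, x) ≥ c ‖x‖²` on it. Since `|Φ_r| ≤ 1`, the series is
dominated by a Gaussian theta series over the shifted lattice, which converges.
-/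

open Module Real Set
open LinearMap (BilinForm)

theorem exists_mem_Icc_one_sub_mul_add_mul_eq_zero {a b : ℝ} (h : Real.sign a ≠ Real.sign b) :
    ∃ s ∈ Icc (0 : ℝ) 1, (1 - s) * a + s * b = 0 := by
  have h0 : (0 : ℝ) ∈ uIcc a b := by
    rcases lt_trichotomy a 0 with ha | rfl | ha <;> rcases lt_trichotomy b 0 with hb | rfl | hb <;>
      simp_all [Real.sign_of_neg, Real.sign_of_pos, mem_uIcc, le_of_lt]
  obtain ⟨s, hs, hs0⟩ := intermediate_value_uIcc (a := (0 : ℝ)) (b := 1)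
    (f := fun s => (1 - s) * a + s * b) (by fun_prop) (by simpa using h0)
  exact ⟨s, by simpa [uIcc_of_le zero_le_one] using hs, hs0⟩

theorem abs_sign_sub_sign_le_two (a b : ℝ) : |Real.sign a - Real.sign b| ≤ 2 := by
  rcases Real.sign_apply_eq a with ha | ha | ha <;>
    rcases Real.sign_apply_eq b with hb | hb | hb <;> norm_num [ha, hb]

theorem abs_inv_two_pow_mul_prod_sign_sub_sign_le_one {r : ℕ} (a b : Fin r → ℝ) :
    |((2 : ℝ) ^ r)⁻¹ * ∏ j, (Real.sign (a j) - Real.sign (b j))| ≤ 1 := by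
  rw [abs_mul, abs_inv, abs_pow, abs_two, Finset.abs_prod, inv_mul_le_iff₀ (by positivity),
    mul_one]
  calc ∏ j, |Real.sign (a j) - Real.sign (b j)| ≤ ∏ _j : Fin r, (2 : ℝ) :=
        Finset.prod_le_prod (fun _ _ => abs_nonneg _) fun j _ => abs_sign_sub_sign_le_two _ _
    _ = 2 ^ r := by simp

theorem exists_pos_mul_norm_sq_le_of_isClosed_cone {E : Type*} [NormedAddCommGroup E]
    [NormedSpace ℝ E] [FiniteDimensional ℝ E] {q : E → ℝ} (hq : Continuous q)
    (hq_smul : ∀ (t : ℝ) x, q (t • x) = t ^ 2 * q x) {K : Set E} (hK : IsClosed K)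
    (hK_smul : ∀ (t : ℝ), ∀ x ∈ K, t • x ∈ K) (hpos : ∀ x ∈ K, x ≠ 0 → 0 < q x) :
    ∃ c > 0, ∀ x ∈ K, c * ‖x‖ ^ 2 ≤ q x := by
  have hcompact : IsCompact (K ∩ Metric.sphere 0 1) :=
    (isCompact_sphere 0 1).inter_left hK
  obtain ⟨c, hc, hcq⟩ := hcompact.exists_forall_le' hq.continuousOn
    (a := 0) fun y hy => hpos y hy.1 (ne_zero_of_mem_unit_sphere ⟨y, hy.2⟩)
  refine ⟨c, hc, fun x hx => ?_⟩
  rcases eq_or_ne x 0 with rfl | hx0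
  · simpa using (hq_smul 0 0).ge
  have hnorm : 0 < ‖x‖ := norm_pos_iff.mpr hx0
  have hunit := hcq (‖x‖⁻¹ • x) ⟨hK_smul _ x hx, by simp [norm_smul, hnorm.ne']⟩
  rwa [hq_smul, inv_pow, ← div_eq_inv_mul, le_div_iff₀ (by positivity)] at hunit

theorem summable_exp_neg_mul_add_sq {a : ℝ} (ha : 0 < a) (t : ℝ) :
    Summable fun k : ℤ => rexp (-a * (k + t) ^ 2) := by
  -- `rexp (-a * (k + t) ^ 2) = rexp (-a * t ^ 2) * ‖jacobiTheta₂_term k (i a t / π) (i a / π)‖`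
  have hθ := ((summable_jacobiTheta₂_term_iff ((a * t / π : ℝ) * Complex.I)
    ((a / π : ℝ) * Complex.I)).mpr (by simpa using div_pos ha pi_pos)).norm
  refine (hθ.mul_left (rexp (-a * t ^ 2))).congr fun k => ?_
  rw [norm_jacobiTheta₂_term, ← Real.exp_add]
  congr 1
  simp only [Complex.mul_I_im, Complex.ofReal_re]
  field_simp
  ring

theorem summable_prod_apply_of_nonneg {α : Type*} {n : ℕ} {f : Fin n → α → ℝ}
    (hf : ∀ i, Summable (f i)) (hf_nonneg : ∀ i, 0 ≤ f i) :
    Summable fun m : Fin n → α => ∏ i, f i (m i) := by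
  induction n with
  | zero => exact (hasSum_fintype _).summable
  | succ n ih =>
    rw [← (Fin.consEquiv fun _ => α).summable_iff]
    simpa [Function.comp_def, Fin.consEquiv, Fin.prod_univ_succ] using
      (hf 0).mul_of_nonneg (ih (fun i => hf i.succ) fun i => hf_nonneg i.succ) (hf_nonneg 0)
        fun m => Finset.prod_nonneg fun i _ => hf_nonneg i.succ (m i)

theorem summable_exp_neg_mul_sum_add_sq {n : ℕ} {a : ℝ} (ha : 0 < a) (t : Fin n → ℝ) :
    Summable fun m : Fin n → ℤ => rexp (-a * ∑ i, ((m i : ℝ) + t i) ^ 2) := by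
  simpa only [Finset.mul_sum, Real.exp_sum] using
    summable_prod_apply_of_nonneg (fun i => summable_exp_neg_mul_add_sq ha (t i))
      fun i k => (Real.exp_pos _).le

section

variable {V : Type*} [AddCommGroup V] [Module ℝ V]

theorem Module.Basis.summable_exp_neg_mul_sum_repr_sq {n : ℕ} (b : Basis (Fin n) ℝ V) (μ : V)
    {a : ℝ} (ha : 0 < a) :
    Summable fun x : {x : V // ∃ l ∈ Submodule.span ℤ (range b), x = l + μ} =>
      rexp (-a * ∑ i, b.repr x i ^ 2) := by
  let coset : Submodule.span ℤ (range b) ≃ {x : V // ∃ l ∈ Submodule.span ℤ (range b), x = l + μ} :=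
    { toFun l := ⟨l + μ, l, l.2, rfl⟩
      invFun x := ⟨x - μ, by obtain ⟨_, ⟨l, hl, rfl⟩⟩ := x; simpa using hl⟩
      left_inv l := by simp
      right_inv x := by simp }
  have hrepr (m : Fin n → ℤ) (i : Fin n) :
      b.repr ((b.restrictScalars ℤ).equivFun.symm m : V) i = m i := by
    rw [← b.restrictScalars_repr_apply ℤ, ← Basis.equivFun_apply, LinearEquiv.apply_symm_apply]
    rfl
  rw [← ((b.restrictScalars ℤ).equivFun.symm.toEquiv.trans coset).summable_iff]
  refine (summable_exp_neg_mul_sum_add_sq ha (b.repr μ)).congr fun m => ?_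
  simp only [Function.comp_apply, Equiv.trans_apply, LinearEquiv.coe_toEquiv, coset,
    Equiv.coe_fn_mk, map_add, Finsupp.add_apply, hrepr]

namespace LinearMap.BilinForm

theorem sigPos_toQuadraticMap_eq_ncard {ι : Type*} [Fintype ι] (B : BilinForm ℝ V)
    (b : Basis ι ℝ V) (hb : B.iIsOrtho b) :
    sigPos B.toQuadraticMap = {i | 0 < B (b i) (b i)}.ncard := by
  have hortho : (QuadraticMap.associated (R := ℝ) B.toQuadraticMap).IsOrthoᵢ b := by
    intro i j hij
    simp only [Function.onFun, QuadraticMap.associated_toQuadraticMap]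
    rw [hb hij, hb hij.symm, add_zero, smul_zero]
  have hrepr := B.toQuadraticMap.basisRepr_eq_of_iIsOrtho b hortho
  exact QuadraticForm.sigPos_of_equiv_weightedSumSquares
    (hrepr ▸ ⟨B.toQuadraticMap.isometryEquivBasisRepr b⟩)

theorem sigPos_toQuadraticMap_eq_sub {n r : ℕ} (B : BilinForm ℝ V) (b : Basis (Fin n) ℝ V)
    (hb : B.iIsOrtho b) (hsig : ∀ i : Fin n, ((i : ℕ) < n - r → 0 < B (b i) (b i)) ∧
      (n - r ≤ (i : ℕ) → B (b i) (b i) < 0)) :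
    sigPos B.toQuadraticMap = n - r := by
  have hpos_iff : {i | 0 < B (b i) (b i)} = {i : Fin n | (i : ℕ) < n - r} := by
    ext i
    exact ⟨fun h => not_le.mp fun hi => ((hsig i).2 hi).not_gt h, (hsig i).1⟩
  rw [B.sigPos_toQuadraticMap_eq_ncard b hb, hpos_iff, ncard_eq_toFinset_card', toFinset_ofPred,
    Fin.card_filter_val_lt]
  omega

theorem IsSymm.pos_of_forall_apply_eq_zero_of_negDef [FiniteDimensional ℝ V] {B : BilinForm ℝ V}
    (hB : B.IsSymm) {W : Submodule ℝ V} (hW : ∀ w ∈ W, w ≠ 0 → B w w < 0)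
    (hdim : finrank ℝ V ≤ sigPos B.toQuadraticMap + finrank ℝ W) {x : V}
    (hx : ∀ w ∈ W, B x w = 0) (hx0 : x ≠ 0) : 0 < B x x := by
  by_contra! hxx
  have hxW : x ∉ W := fun hxW => (hW x hxW hx0).ne (hx x hxW)
  have hnonpos : ∀ u ∈ W ⊔ ℝ ∙ x, B.toQuadraticMap u ≤ 0 := by
    intro u hu
    obtain ⟨w, hw, _, hy, rfl⟩ := Submodule.mem_sup.mp hu
    obtain ⟨c, rfl⟩ := Submodule.mem_span_singleton.mp hy
    have hwx : B w x = 0 := by rw [hB.eq, hx w hw]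
    have hww : B w w ≤ 0 := by
      rcases eq_or_ne w 0 with rfl | hw0
      · simp
      · exact (hW w hw hw0).le
    have : B (w + c • x) (w + c • x) = B w w + c ^ 2 * B x x := by
      simp only [map_add, map_smul, LinearMap.add_apply, LinearMap.smul_apply, smul_eq_mul,
        hwx, hx w hw]
      ring
    rw [LinearMap.BilinMap.toQuadraticMap_apply, this]
    nlinarith [sq_nonneg c]
  have := QuadraticForm.sigPos_add_finrank_le_of_nonpos hnonpos
  rw [Submodule.finrank_sup_span_singleton hxW] at this
  omega

def orthSegments {κ : Type*} (B : BilinForm ℝ V) (C C' : κ → V) : Set V :=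
  {x | ∃ s : κ → ℝ, (∀ j, s j ∈ Icc (0 : ℝ) 1) ∧ ∀ j, B x ((1 - s j) • C j + s j • C' j) = 0}

variable {κ : Type*} {B : BilinForm ℝ V} {C C' : κ → V}

theorem smul_mem_orthSegments (t : ℝ) {x : V} (hx : x ∈ B.orthSegments C C') :
    t • x ∈ B.orthSegments C C' := by
  obtain ⟨s, hs, hBs⟩ := hx
  exact ⟨s, hs, fun j => by rw [map_smul, LinearMap.smul_apply, hBs j, smul_zero]⟩

theorem mem_orthSegments_of_prod_ne_zero [Fintype κ] {x : V}
    (h : ∏ j, (Real.sign (B x (C j)) - Real.sign (B x (C' j))) ≠ 0) :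
    x ∈ B.orthSegments C C' := by
  choose s hs hs0 using fun j => exists_mem_Icc_one_sub_mul_add_mul_eq_zero
    (sub_ne_zero.mp (Finset.prod_ne_zero_iff.mp h j (Finset.mem_univ j)))
  exact ⟨s, hs, fun j => by simpa only [map_add, map_smul, smul_eq_mul] using hs0 j⟩

theorem IsSymm.pos_of_mem_orthSegments [FiniteDimensional ℝ V] [Fintype κ] (hB : B.IsSymm)
    (hdim : finrank ℝ V ≤ sigPos B.toQuadraticMap + Fintype.card κ)
    (hneg : ∀ s : κ → ℝ, (∀ j, s j ∈ Icc (0 : ℝ) 1) →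
      LinearIndependent ℝ (fun j => (1 - s j) • C j + s j • C' j) ∧
      ∀ w ∈ Submodule.span ℝ (Set.range fun j => (1 - s j) • C j + s j • C' j), w ≠ 0 →
        B w w < 0)
    {x : V} (hx : x ∈ B.orthSegments C C') (hx0 : x ≠ 0) : 0 < B x x := by
  obtain ⟨s, hs, hxs⟩ := hx
  obtain ⟨hli, hnegdef⟩ := hneg s hs
  refine hB.pos_of_forall_apply_eq_zero_of_negDef hnegdef ?_ (fun w hw => ?_) hx0
  · rwa [finrank_span_eq_card hli]
  · exact (Submodule.span_le (p := LinearMap.ker (B x))).mpr (by rintro _ ⟨j, rfl⟩; exact hxs j) hw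

theorem exists_pos_mul_sum_repr_sq_le {ι : Type*} [Fintype ι] [Fintype κ] (b : Basis ι ℝ V)
    (hpos : ∀ x ∈ B.orthSegments C C', x ≠ 0 → 0 < B x x) :
    ∃ c > 0, ∀ x ∈ B.orthSegments C C', c * ∑ i, b.repr x i ^ 2 ≤ B x x := by
  let e : EuclideanSpace ℝ ι ≃ₗ[ℝ] V := (WithLp.linearEquiv 2 ℝ (ι → ℝ)).trans b.equivFun.symm
  have hcont : ∀ w, Continuous fun y => B (e y) w := fun w =>
    LinearMap.continuous_of_finiteDimensional (B.flip w ∘ₗ e.toLinearMap)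
  have hq : Continuous fun y => B (e y) (e y) :=
    (LinearMap.continuous_of_finiteDimensional (LinearMap.toContinuousLinearMap.toLinearMap ∘ₗ
      B.compl₁₂ e.toLinearMap e.toLinearMap)).clm_apply continuous_id
  have hK : IsClosed (e ⁻¹' B.orthSegments C C') := by
    have : e ⁻¹' B.orthSegments C C' = Prod.snd '' {p : (κ → Icc (0 : ℝ) 1) × EuclideanSpace ℝ ι |
        ∀ j, (1 - p.1 j) * B (e p.2) (C j) + p.1 j * B (e p.2) (C' j) = 0} := by
      ext y
      simp only [orthSegments, mem_preimage, mem_ofPred_eq, mem_image, Prod.exists,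
        exists_eq_right, map_add, map_smul, smul_eq_mul]
      exact ⟨fun ⟨s, hs, h⟩ => ⟨fun j => ⟨s j, hs j⟩, h⟩, fun ⟨s, h⟩ => ⟨_, fun j => (s j).2, h⟩⟩
    rw [this]
    refine isClosedMap_snd_of_compactSpace _ ?_
    simp only [ofPred_forall]
    refine isClosed_iInter fun j => isClosed_eq ?_ continuous_const
    have hs : Continuous fun p : (κ → Icc (0 : ℝ) 1) × EuclideanSpace ℝ ι => (p.1 j : ℝ) := by
      fun_prop
    exact ((continuous_const.sub hs).mul ((hcont _).comp continuous_snd)).add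
      (hs.mul ((hcont _).comp continuous_snd))
  obtain ⟨c, hc, hcK⟩ := exists_pos_mul_norm_sq_le_of_isClosed_cone hq
    (fun t y => by simp only [map_smul, LinearMap.smul_apply, smul_eq_mul]; ring) hK
    (fun t y hy => by simpa using smul_mem_orthSegments t hy)
    (fun y hy hy0 => hpos _ hy (by simpa using hy0))
  refine ⟨c, hc, fun x hx => ?_⟩
  have := hcK (e.symm x) (by simpa using hx)
  rwa [EuclideanSpace.real_norm_sq_eq, LinearEquiv.apply_symm_apply] at this

end LinearMap.BilinForm

end

theorem summable_phi_r_qseries_general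
    {V : Type*} [AddCommGroup V] [Module ℝ V]
    (n r : ℕ)
    (B : LinearMap.BilinForm ℝ V) (hsymm : B.IsSymm)
    (bsig : Module.Basis (Fin n) ℝ V)
    (horth : ∀ i j, i ≠ j → B (bsig i) (bsig j) = 0)
    (hsig : ∀ i : Fin n, ((i : ℕ) < n - r → 0 < B (bsig i) (bsig i)) ∧
        (n - r ≤ (i : ℕ) → B (bsig i) (bsig i) < 0))
    (C C' : Fin r → V)
    (hneg : ∀ s : Fin r → ℝ, (∀ j, s j ∈ Icc (0:ℝ) 1) →
      LinearIndependent ℝ (fun j : Fin r => (1 - s j) • C j + s j • C' j) ∧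
      ∀ w ∈ Submodule.span ℝ (Set.range fun j : Fin r => (1 - s j) • C j + s j • C' j),
        w ≠ 0 → B w w < 0)
    (bL : Module.Basis (Fin n) ℝ V) (μ : V) (v : ℝ) (hv : 0 < v) :
    Summable (fun x : {x : V // ∃ l ∈ Submodule.span ℤ (Set.range ⇑bL), x = l + μ} =>
      |((2:ℝ)^r)⁻¹ *
          ∏ j : Fin r, (Real.sign (B x (C j)) - Real.sign (B x (C' j)))| *
        Real.exp (-Real.pi * v * B x x)) := by
  have : FiniteDimensional ℝ V := bsig.finiteDimensional_of_finite
  have hdim : finrank ℝ V ≤ sigPos B.toQuadraticMap + Fintype.card (Fin r) := by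
    rw [finrank_eq_card_basis bsig, B.sigPos_toQuadraticMap_eq_sub bsig horth hsig]
    simp only [Fintype.card_fin]
    omega
  obtain ⟨c, hc, hcK⟩ :=
    B.exists_pos_mul_sum_repr_sq_le bL fun _ => hsymm.pos_of_mem_orthSegments hdim hneg
  refine (bL.summable_exp_neg_mul_sum_repr_sq μ (a := π * v * c) (by positivity)).of_nonneg_of_le
    (fun x => by positivity) fun x => ?_
  by_cases hΦ : ∏ j, (Real.sign (B x (C j)) - Real.sign (B x (C' j))) = 0
  · rw [hΦ, mul_zero, abs_zero, zero_mul]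
    positivity
  calc _ ≤ 1 * rexp (-π * v * B x x) := by
        gcongr
        exact abs_inv_two_pow_mul_prod_sign_sub_sign_le_one _ _
    _ ≤ rexp (-(π * v * c) * ∑ i, bL.repr x i ^ 2) := by
        rw [one_mul, exp_le_exp]
        have := hcK x (B.mem_orthSegments_of_prod_ne_zero hΦ)
        nlinarith [mul_pos pi_pos hv]

/-- Proposition 5.3(ii) of the paper: for signature `(n−r,r)`, if the form is
negative definite on each `r`-plane `span{B_1(s_1), …, B_r(s_r)}`,
`s ∈ [0,1]^r`, then the family `x ↦ Φ_r(x)·e^{−πv(x,x)}`, indexed by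
`x ∈ L + μ` for a lattice `L` (the ℤ-span of an ℝ-basis of `V`), is absolutely
summable. -/
theorem summable_phi_r_qseries
    {V : Type*} [AddCommGroup V] [Module ℝ V]
    (n r : ℕ) (hr : 1 ≤ r) (hrn : r ≤ n)
    (B : LinearMap.BilinForm ℝ V) (hsymm : B.IsSymm) (hnd : B.Nondegenerate)
    (bsig : Module.Basis (Fin n) ℝ V)
    (horth : ∀ i j, i ≠ j → B (bsig i) (bsig j) = 0)
    (hsig : ∀ i : Fin n, ((i : ℕ) < n - r → 0 < B (bsig i) (bsig i)) ∧
        (n - r ≤ (i : ℕ) → B (bsig i) (bsig i) < 0))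
    (C C' : Fin r → V)
    (hneg : ∀ s : Fin r → ℝ, (∀ j, s j ∈ Icc (0:ℝ) 1) →
      LinearIndependent ℝ (fun j : Fin r => (1 - s j) • C j + s j • C' j) ∧
      ∀ w ∈ Submodule.span ℝ (Set.range fun j : Fin r => (1 - s j) • C j + s j • C' j),
        w ≠ 0 → B w w < 0)
    (bL : Module.Basis (Fin n) ℝ V) (μ : V) (v : ℝ) (hv : 0 < v) :
    Summable (fun x : {x : V // ∃ l ∈ Submodule.span ℤ (Set.range ⇑bL), x = l + μ} =>
      |((2:ℝ)^r)⁻¹ *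
          ∏ j : Fin r, (Real.sign (B x (C j)) - Real.sign (B x (C' j)))| *
        Real.exp (-Real.pi * v * B x x)) :=
  summable_phi_r_qseries_general n r B hsymm bsig horth hsig C C' hneg bL μ v hv
end

section
/- Let V be an n-dimensional real vector space equipped with a nondegenerate symmetric bilinear form (·,·) of signature (n−2,2), n ≥ 4, and let C₁, C₂, C₁′, C₂′ ∈ V with (C,C) < 0 for each C ∈ {C₁, C₂, C₁′, C₂′}, with Δ(C₁,C₂) > 0, Δ(C₁,C₂′) > 0, Δ(C₁′,C₂) > 0, Δ(C₁′,C₂′) > 0, and suppose the determinant of the 4×4 Gram matrix ((Cᵢ,Cⱼ)) of (C₁, C₁′, C₂, C₂′) is positive. Then: (a) the vectors C₁, C₁′, C₂, C₂′ are linearly independent, and the restriction of (·,·) to the 4-dimensional subspace U := span{C₁, C₁′, C₂, C₂′} is nondegenerate of signature (2,2); (b) the four negative 2-planes span{C₁,C₂}, span{C₁,C₂′}, span{C₁′,C₂}, span{C₁′,C₂′} are pairwise distinct. -/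
/-!
The Gram determinant of `C₁, C₁', C₂, C₂'` does not vanish, so these vectors are linearly
independent and the form is nondegenerate on their span `U`; hence no vector of an orthogonal
basis of `U` is isotropic. The signature of `U` is then read off by Sylvester's argument: a family
spanning a negative definite subspace injects, via its coordinates, into the span of the basis
vectors of nonpositive length of any orthogonal basis. Applied in `V` this bounds the negative
index of `U` by 2, and applied in `U` to the negative plane `span{C₁, C₂}` it bounds it below
by 2. The four planes are distinct because the four vectors are independent.
-/

theorem Fintype.exists_fin_add_equiv_lt_iff {ι : Type*} [Fintype ι] (P : ι → Prop)
    [DecidablePred P] {p q : ℕ} (hp : Fintype.card {i // P i} = p)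
    (hq : Fintype.card {i // ¬P i} = q) :
    ∃ σ : Fin (p + q) ≃ ι, ∀ j : Fin (p + q), (j : ℕ) < p ↔ P (σ j) := by
  refine ⟨finSumFinEquiv.symm.trans ((Equiv.sumCongr (Fintype.equivFinOfCardEq hp).symm
    (Fintype.equivFinOfCardEq hq).symm).trans (Equiv.sumCompl P)), fun j => ?_⟩
  induction j using Fin.addCases with
  | left a => simp [a.isLt, Subtype.property]
  | right b => simpa using ((Fintype.equivFinOfCardEq hq).symm b).property

theorem Fin.card_nonpos_le_of_pos_of_lt_sub {α : Type*} [Zero α] [LinearOrder α] {n k : ℕ}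
    {f : Fin n → α} (hf : ∀ i : Fin n, (i : ℕ) < n - k → 0 < f i) :
    Fintype.card {i // f i ≤ 0} ≤ k := by
  have hlow (i : {i // f i ≤ 0}) : n - k ≤ (i.1 : ℕ) := not_lt.mp fun h => (hf i h).not_ge i.2
  simpa using Fintype.card_le_of_injective
    (fun i => (⟨i.1 - (n - k), by have := hlow i; omega⟩ : Fin k)) fun i j h => by
      have hij : i.1.val - (n - k) = j.1.val - (n - k) := congrArg Fin.val h
      have := hlow i
      have := hlow j
      exact Subtype.ext (Fin.ext (by omega))

theorem LinearIndependent.span_pair_ne_of_mem {R M ι : Type*} [Ring R] [AddCommGroup M]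
    [Module R M] [Nontrivial R] {w : ι → M} (hw : LinearIndependent R w) {i j k : ι}
    (hki : k ≠ i) (hkj : k ≠ j) {S : Submodule R M} (hk : w k ∈ S) :
    Submodule.span R {w i, w j} ≠ S := by
  rintro rfl
  rw [← Set.image_pair] at hk
  exact hw.notMem_span_image (by simp [hki, hkj]) hk

namespace LinearMap.BilinForm

section CommRing

variable {R M ι : Type*} [CommRing R] [AddCommGroup M] [Module R M]
  (B : LinearMap.BilinForm R M) [Fintype ι]

theorem apply_sum_smul_self_of_iIsOrtho {v : ι → M} (hv : B.iIsOrtho v) (c : ι → R) :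
    B (∑ i, c i • v i) (∑ i, c i • v i) = ∑ i, c i ^ 2 * B (v i) (v i) := by
  simp only [map_sum, LinearMap.sum_apply, map_smul, LinearMap.smul_apply, smul_eq_mul]
  refine Finset.sum_congr rfl fun j _ => ?_
  rw [Finset.sum_eq_single j (fun i _ hij => by simp [iIsOrtho_def.mp hv i j hij])
    (fun h => absurd (Finset.mem_univ j) h)]
  ring

theorem apply_self_eq_sum_repr_sq {b : Module.Basis ι R M} (hb : B.iIsOrtho b) (x : M) :
    B x x = ∑ i, b.repr x i ^ 2 * B (b i) (b i) := by
  conv_lhs => rw [← b.sum_repr x]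
  exact B.apply_sum_smul_self_of_iIsOrtho hb _

variable [IsDomain R] [DecidableEq ι]

theorem linearIndependent_of_det_ne_zero {v : ι → M}
    (h : (Matrix.of fun i j => B (v i) (v j)).det ≠ 0) : LinearIndependent R v := by
  rw [Fintype.linearIndependent_iff]
  intro c hc
  refine congrFun (Matrix.eq_zero_of_mulVec_eq_zero h (funext fun i => ?_))
  simpa [Matrix.mulVec, dotProduct, map_sum, mul_comm] using congrArg (B (v i)) hc

theorem nondegenerate_restrict_span_of_det_ne_zero {v : ι → M}
    (h : (Matrix.of fun i j => B (v i) (v j)).det ≠ 0) :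
    (B.restrict (Submodule.span R (Set.range v))).Nondegenerate := by
  let b := Module.Basis.span (B.linearIndependent_of_det_ne_zero h)
  rw [nondegenerate_iff_det_ne_zero b]
  convert h using 2
  ext i j
  simp [b, toMatrix_apply]

end CommRing

section Field

variable {K M ι : Type*} [Field K] [Invertible (2 : K)] [AddCommGroup M] [Module K M]
  (B : LinearMap.BilinForm K M) [Fintype ι] [DecidableEq ι]

theorem exists_iIsOrtho_basis_span_of_det_ne_zero (hB : B.IsSymm) {v : ι → M}
    (h : (Matrix.of fun i j => B (v i) (v j)).det ≠ 0) :
    ∃ u : Module.Basis ι K (Submodule.span K (Set.range v)),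
      (B.restrict _).iIsOrtho u ∧ ∀ i, B (u i) (u i) ≠ 0 := by
  set U := Submodule.span K (Set.range v)
  have : FiniteDimensional K U := FiniteDimensional.span_of_finite K (Set.finite_range v)
  obtain ⟨u, hu⟩ := exists_orthogonal_basis (isSymm_iff.mp (hB.restrict U))
  let σ := Fintype.equivOfCardEq
    ((Fintype.card_fin _).trans (finrank_span_eq_card (B.linearIndependent_of_det_ne_zero h)))
  have hu' : (B.restrict U).iIsOrtho (u.reindex σ) := iIsOrtho_def.mpr fun i j hij => by
    simpa using iIsOrtho_def.mp hu _ _ (σ.symm.injective.ne hij)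
  exact ⟨u.reindex σ, hu',
    hu'.not_isOrtho_basis_self_of_nondegenerate (B.nondegenerate_restrict_span_of_det_ne_zero h)⟩

end Field

section Real

variable {M ι κ : Type*} [AddCommGroup M] [Module ℝ M] (B : LinearMap.BilinForm ℝ M)
  [Fintype ι] [Fintype κ]

theorem card_le_card_nonpos_of_neg {b : Module.Basis ι ℝ M} (hb : B.iIsOrtho b) {v : κ → M}
    (hv : ∀ c : κ → ℝ, c ≠ 0 → B (∑ k, c k • v k) (∑ k, c k • v k) < 0) :
    Fintype.card κ ≤ Fintype.card {i // B (b i) (b i) ≤ 0} := by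
  let f : (κ → ℝ) →ₗ[ℝ] ({i // B (b i) (b i) ≤ 0} → ℝ) :=
    (LinearMap.pi fun i => b.coord i) ∘ₗ Fintype.linearCombination ℝ v
  have hf : Function.Injective f := by
    rw [← LinearMap.ker_eq_bot, LinearMap.ker_eq_bot']
    intro c hc
    by_contra hne
    refine (hv c hne).not_ge ?_
    rw [B.apply_self_eq_sum_repr_sq hb]
    refine Finset.sum_nonneg fun i _ => ?_
    by_cases hi : B (b i) (b i) ≤ 0
    · have hci : b.repr (∑ k, c k • v k) i = 0 := by
        simpa [f, Fintype.linearCombination_apply] using congrFun hc ⟨i, hi⟩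
      rw [hci]
      simp
    · exact mul_nonneg (sq_nonneg _) (le_of_not_ge hi)
  simpa using LinearMap.finrank_le_finrank_of_injective hf

theorem apply_sum_smul_self_neg_of_iIsOrtho {v : κ → M} (hv : B.iIsOrtho v)
    (hneg : ∀ k, B (v k) (v k) < 0) {c : κ → ℝ} (hc : c ≠ 0) :
    B (∑ k, c k • v k) (∑ k, c k • v k) < 0 := by
  rw [B.apply_sum_smul_self_of_iIsOrtho hv]
  obtain ⟨k, hk⟩ := Function.ne_iff.mp hc
  exact Finset.sum_neg' (fun i _ => mul_nonpos_of_nonneg_of_nonpos (sq_nonneg _) (hneg i).le)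
    ⟨k, Finset.mem_univ k, mul_neg_of_pos_of_neg (sq_pos_of_ne_zero hk) (hneg k)⟩

theorem card_nonpos_le_of_iIsOrtho {b : Module.Basis ι ℝ M} (hb : B.iIsOrtho b) {v : κ → M}
    (hv : B.iIsOrtho v) (hd : ∀ k, B (v k) (v k) ≠ 0) :
    Fintype.card {k // B (v k) (v k) ≤ 0} ≤ Fintype.card {i // B (b i) (b i) ≤ 0} := by
  refine B.card_le_card_nonpos_of_neg hb fun c hc =>
    B.apply_sum_smul_self_neg_of_iIsOrtho ?_ (fun k => k.2.lt_of_ne (hd k)) hc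
  exact iIsOrtho_def.mpr fun k l hkl => iIsOrtho_def.mp hv k l (Subtype.coe_injective.ne hkl)

theorem apply_sum_smul_pair_self_neg (hB : B.IsSymm) {x y : M} (hx : B x x < 0)
    (hxy : 0 < B x x * B y y - B x y ^ 2) {c : Fin 2 → ℝ} (hc : c ≠ 0) :
    B (∑ k, c k • ![x, y] k) (∑ k, c k • ![x, y] k) < 0 := by
  have hyx : B y x = B x y := hB.eq y x
  have hQ : B (∑ k, c k • ![x, y] k) (∑ k, c k • ![x, y] k) * B x x =
      (B x x * c 0 + B x y * c 1) ^ 2 + (B x x * B y y - B x y ^ 2) * c 1 ^ 2 := by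
    simp only [Fin.sum_univ_two, Matrix.cons_val_zero, Matrix.cons_val_one, map_add, map_smul,
      LinearMap.add_apply, LinearMap.smul_apply, smul_eq_mul, hyx]
    ring
  refine neg_of_mul_pos_left ?_ hx.le
  rw [hQ]
  rcases eq_or_ne (c 1) 0 with h1 | h1
  · have h0 : c 0 ≠ 0 := fun h0 => hc (funext fun k => by fin_cases k <;> assumption)
    rw [h1]
    simpa using sq_pos_of_ne_zero (mul_ne_zero hx.ne h0)
  · exact add_pos_of_nonneg_of_pos (sq_nonneg _) (mul_pos hxy (sq_pos_of_ne_zero h1))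

theorem exists_orthogonal_signature_family {U : Submodule ℝ M} {v : Module.Basis ι ℝ U}
    (hv : (B.restrict U).iIsOrtho v) (hd : ∀ i, B (v i) (v i) ≠ 0) {p q : ℕ}
    (hq : Fintype.card {i // B (v i) (v i) ≤ 0} = q) (hpq : Fintype.card ι = p + q) :
    ∃ e : Fin (p + q) → M, Submodule.span ℝ (Set.range e) = U ∧
      (∀ i j, i ≠ j → B (e i) (e j) = 0) ∧
      ∀ i : Fin (p + q), ((i : ℕ) < p → 0 < B (e i) (e i)) ∧
        (p ≤ (i : ℕ) → B (e i) (e i) < 0) := by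
  have hq' : Fintype.card {i // ¬0 < B (v i) (v i)} = q := by simpa only [not_lt] using hq
  have hp : Fintype.card {i // 0 < B (v i) (v i)} = p := by
    have := Fintype.card_subtype_compl fun i => 0 < B (v i) (v i)
    have := Fintype.card_subtype_le fun i => 0 < B (v i) (v i)
    omega
  obtain ⟨σ, hσ⟩ := Fintype.exists_fin_add_equiv_lt_iff _ hp hq'
  refine ⟨fun j => v (σ j), ?_, fun i j hij => iIsOrtho_def.mp hv _ _ (σ.injective.ne hij),
    fun j => ⟨(hσ j).mp, fun hj => (not_lt.mp ((hσ j).not.mp (by omega))).lt_of_ne (hd _)⟩⟩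
  rw [show Set.range (fun j => (v (σ j) : M)) = U.subtype '' Set.range v by
      rw [← Set.range_comp]; exact σ.surjective.range_comp (U.subtype ∘ v),
    Submodule.span_image, v.span_eq, Submodule.map_subtype_top]

end Real

end LinearMap.BilinForm

theorem incidence_conditions_consequences_general
    {V : Type*} [AddCommGroup V] [Module ℝ V]
    (n : ℕ)
    (B : LinearMap.BilinForm ℝ V) (hsymm : B.IsSymm)
    (bsig : Module.Basis (Fin n) ℝ V)
    (horth : ∀ i j, i ≠ j → B (bsig i) (bsig j) = 0)
    (hsig : ∀ i : Fin n, ((i : ℕ) < n - 2 → 0 < B (bsig i) (bsig i)) ∧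
        (n - 2 ≤ (i : ℕ) → B (bsig i) (bsig i) < 0))
    (C₁ C₂ C₁' C₂' : V)
    (hC₁ : B C₁ C₁ < 0)
    (hΔ12 : 0 < B C₁ C₁ * B C₂ C₂ - (B C₁ C₂)^2)
    (hdet : 0 < Matrix.det
      !![B C₁ C₁,  B C₁ C₁',  B C₁ C₂,  B C₁ C₂';
         B C₁' C₁, B C₁' C₁', B C₁' C₂, B C₁' C₂';
         B C₂ C₁,  B C₂ C₁',  B C₂ C₂,  B C₂ C₂';
         B C₂' C₁, B C₂' C₁', B C₂' C₂, B C₂' C₂']) :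
    (LinearIndependent ℝ ![C₁, C₁', C₂, C₂'] ∧
      ∃ e : Fin 4 → V,
        Submodule.span ℝ (Set.range e) = Submodule.span ℝ {C₁, C₁', C₂, C₂'} ∧
        (∀ i j, i ≠ j → B (e i) (e j) = 0) ∧
        (∀ i : Fin 4, ((i : ℕ) < 2 → 0 < B (e i) (e i)) ∧
            (2 ≤ (i : ℕ) → B (e i) (e i) < 0))) ∧
    (Submodule.span ℝ {C₁, C₂} ≠ Submodule.span ℝ {C₁, C₂'} ∧
     Submodule.span ℝ {C₁, C₂} ≠ Submodule.span ℝ {C₁', C₂} ∧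
     Submodule.span ℝ {C₁, C₂} ≠ Submodule.span ℝ {C₁', C₂'} ∧
     Submodule.span ℝ {C₁, C₂'} ≠ Submodule.span ℝ {C₁', C₂} ∧
     Submodule.span ℝ {C₁, C₂'} ≠ Submodule.span ℝ {C₁', C₂'} ∧
     Submodule.span ℝ {C₁', C₂} ≠ Submodule.span ℝ {C₁', C₂'}) := by
  set w : Fin 4 → V := ![C₁, C₁', C₂, C₂']
  have hgram : (Matrix.of fun i j => B (w i) (w j)).det ≠ 0 := by
    convert hdet.ne' using 2
    ext i j
    fin_cases i <;> fin_cases j <;> rfl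
  have hw : LinearIndependent ℝ w := B.linearIndependent_of_det_ne_zero hgram
  have hU : Submodule.span ℝ (Set.range w) = Submodule.span ℝ {C₁, C₁', C₂, C₂'} := by
    simp only [w, Matrix.range_cons, Matrix.range_empty, Set.union_empty, Set.singleton_union]
  obtain ⟨v, hv, hd⟩ := B.exists_iIsOrtho_basis_span_of_det_ne_zero hsymm hgram
  have hneg_le : Fintype.card {i // B (v i) (v i) ≤ 0} ≤ 2 :=
    (B.card_nonpos_le_of_iIsOrtho (LinearMap.BilinForm.iIsOrtho_def.mpr horth)
      (v := fun i => (v i : V)) hv hd).trans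
      (Fin.card_nonpos_le_of_pos_of_lt_sub fun i => (hsig i).1)
  have hneg_ge : 2 ≤ Fintype.card {i // B (v i) (v i) ≤ 0} := by
    simpa using (B.restrict _).card_le_card_nonpos_of_neg hv
      (v := ![⟨C₁, Submodule.subset_span ⟨0, rfl⟩⟩,
        ⟨C₂, Submodule.subset_span ⟨2, rfl⟩⟩])
      fun c hc => (B.restrict _).apply_sum_smul_pair_self_neg (hsymm.restrict _) hC₁ hΔ12 hc
  obtain ⟨e, he⟩ := B.exists_orthogonal_signature_family hv hd (le_antisymm hneg_le hneg_ge)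
    (p := 2) (by simp)
  refine ⟨⟨hw, e, hU ▸ he.1, he.2⟩,
    hw.span_pair_ne_of_mem (i := 0) (j := 2) (k := 3) ?_ ?_ ?_,
    hw.span_pair_ne_of_mem (i := 0) (j := 2) (k := 1) ?_ ?_ ?_,
    hw.span_pair_ne_of_mem (i := 0) (j := 2) (k := 1) ?_ ?_ ?_,
    hw.span_pair_ne_of_mem (i := 0) (j := 3) (k := 1) ?_ ?_ ?_,
    hw.span_pair_ne_of_mem (i := 0) (j := 3) (k := 1) ?_ ?_ ?_,
    hw.span_pair_ne_of_mem (i := 1) (j := 2) (k := 3) ?_ ?_ ?_⟩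
  all_goals first
    | decide
    | exact Submodule.subset_span (by simp [w])

/-- Consequences of the incidence conditions (1.10)–(1.12) of the paper in
signature `(n−2,2)`: if `C₁, C₂, C₁′, C₂′` are negative vectors with
`Δ₁₂, Δ₁₂′, Δ₁′₂, Δ₁′₂′ > 0` and `Δ₁₁′₂₂′ = det((Cᵢ,Cⱼ)) > 0`, then
(a) `C₁, C₁′, C₂, C₂′` are linearly independent and the restriction of the form
to `U = span{C₁, C₁′, C₂, C₂′}` is nondegenerate of signature `(2,2)` (i.e. `U`
has an orthogonal basis with two positive and two negative vectors), and
(b) the four negative 2-planes `span{C₁,C₂}`, `span{C₁,C₂′}`, `span{C₁′,C₂}`,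
`span{C₁′,C₂′}` are pairwise distinct. -/
theorem incidence_conditions_consequences
    {V : Type*} [AddCommGroup V] [Module ℝ V]
    (n : ℕ) (hn : 4 ≤ n)
    (B : LinearMap.BilinForm ℝ V) (hsymm : B.IsSymm) (hnd : B.Nondegenerate)
    (bsig : Module.Basis (Fin n) ℝ V)
    (horth : ∀ i j, i ≠ j → B (bsig i) (bsig j) = 0)
    (hsig : ∀ i : Fin n, ((i : ℕ) < n - 2 → 0 < B (bsig i) (bsig i)) ∧
        (n - 2 ≤ (i : ℕ) → B (bsig i) (bsig i) < 0))
    (C₁ C₂ C₁' C₂' : V)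
    (hC₁ : B C₁ C₁ < 0) (hC₂ : B C₂ C₂ < 0)
    (hC₁' : B C₁' C₁' < 0) (hC₂' : B C₂' C₂' < 0)
    (hΔ12 : 0 < B C₁ C₁ * B C₂ C₂ - (B C₁ C₂)^2)
    (hΔ12' : 0 < B C₁ C₁ * B C₂' C₂' - (B C₁ C₂')^2)
    (hΔ1'2 : 0 < B C₁' C₁' * B C₂ C₂ - (B C₁' C₂)^2)
    (hΔ1'2' : 0 < B C₁' C₁' * B C₂' C₂' - (B C₁' C₂')^2)
    (hdet : 0 < Matrix.det
      !![B C₁ C₁,  B C₁ C₁',  B C₁ C₂,  B C₁ C₂';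
         B C₁' C₁, B C₁' C₁', B C₁' C₂, B C₁' C₂';
         B C₂ C₁,  B C₂ C₁',  B C₂ C₂,  B C₂ C₂';
         B C₂' C₁, B C₂' C₁', B C₂' C₂, B C₂' C₂']) :
    (LinearIndependent ℝ ![C₁, C₁', C₂, C₂'] ∧
      ∃ e : Fin 4 → V,
        Submodule.span ℝ (Set.range e) = Submodule.span ℝ {C₁, C₁', C₂, C₂'} ∧
        (∀ i j, i ≠ j → B (e i) (e j) = 0) ∧
        (∀ i : Fin 4, ((i : ℕ) < 2 → 0 < B (e i) (e i)) ∧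
            (2 ≤ (i : ℕ) → B (e i) (e i) < 0))) ∧
    (Submodule.span ℝ {C₁, C₂} ≠ Submodule.span ℝ {C₁, C₂'} ∧
     Submodule.span ℝ {C₁, C₂} ≠ Submodule.span ℝ {C₁', C₂} ∧
     Submodule.span ℝ {C₁, C₂} ≠ Submodule.span ℝ {C₁', C₂'} ∧
     Submodule.span ℝ {C₁, C₂'} ≠ Submodule.span ℝ {C₁', C₂} ∧
     Submodule.span ℝ {C₁, C₂'} ≠ Submodule.span ℝ {C₁', C₂'} ∧
     Submodule.span ℝ {C₁', C₂} ≠ Submodule.span ℝ {C₁', C₂'}) :=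
  incidence_conditions_consequences_general n B hsymm bsig horth hsig C₁ C₂ C₁' C₂' hC₁ hΔ12 hdet
end
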